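/- Let S be a complete restriction monoid. Then any nonempty family T of elements of S has a meet in S, given by z = fs for any s ∈ T, where f is the join of all projections g such that gx = gy for all x, y ∈ T. -/
import Mathlib


structure EhresmannSemigroup (S : Type*) [Semigroup S] where
  E : Set S
  E_nonempty : E.Nonempty
  idem : ∀ a ∈ E, a * a = a
  comm : ∀ a ∈ E, ∀ b ∈ E, a * b = b * a
  mul_mem : ∀ a ∈ E, ∀ b ∈ E, a * b ∈ E
  lam : S → S
  rho : S → S
  lam_mem : ∀ a, lam a ∈ E
  rho_mem : ∀ a, rho a ∈ E
  lam_proj : ∀ a ∈ E, lam a = a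
  rho_proj : ∀ a ∈ E, rho a = a
  mul_lam : ∀ a, a * lam a = a
  rho_mul : ∀ a, rho a * a = a
  lam_lam : ∀ a b, lam (lam a * b) = lam (a * b)
  rho_rho : ∀ a b, rho (a * rho b) = rho (a * b)

/-- The natural partial order: `a ≤ b` iff `a = e * b = b * f` for some projections `e, f`. -/
def EhresmannSemigroup.nle {S : Type*} [Semigroup S] (R : EhresmannSemigroup S)
    (a b : S) : Prop :=
  ∃ e ∈ R.E, ∃ f ∈ R.E, a = e * b ∧ a = b * f

structure RestrictionSemigroup (S : Type*) [Semigroup S] extends EhresmannSemigroup S where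
  bd_left : ∀ a, ∀ f ∈ E, f * a = a * lam (f * a)
  bd_right : ∀ a, ∀ f ∈ E, a * f = rho (a * f) * a

namespace RestrictionSemigroup

variable {S : Type*} [Semigroup S]

def nle (R : RestrictionSemigroup S) : S → S → Prop :=
  R.toEhresmannSemigroup.nle

/-- Compatibility of two elements. -/
def compat (R : RestrictionSemigroup S) (a b : S) : Prop :=
  a * R.lam b = b * R.lam a ∧ R.rho b * a = R.rho a * b

/-- `s` is the join (least upper bound) of `A` w.r.t. the natural partial order. -/
def isJoin (R : RestrictionSemigroup S) (A : Set S) (s : S) : Prop :=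
  (∀ a ∈ A, R.nle a s) ∧ ∀ t, (∀ a ∈ A, R.nle a t) → R.nle s t

/-- `z` is the meet (greatest lower bound) of `A` w.r.t. the natural partial order. -/
def isMeet (R : RestrictionSemigroup S) (A : Set S) (z : S) : Prop :=
  (∀ a ∈ A, R.nle z a) ∧ ∀ w, (∀ a ∈ A, R.nle w a) → R.nle w z

end RestrictionSemigroup

namespace RestrictionSemigroup

variable {S : Type*} [Semigroup S] (R : RestrictionSemigroup S)

lemma rho_left' (e : S) (he : e ∈ R.E) (b : S) : R.rho (e * b) = e * R.rho b := by
  rw [← R.rho_rho e b, R.rho_proj _ (R.mul_mem e he _ (R.rho_mem b))]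

lemma lam_right' (f : S) (hf : f ∈ R.E) (b : S) : R.lam (b * f) = R.lam b * f := by
  rw [← R.lam_lam b f, R.lam_proj _ (R.mul_mem _ (R.lam_mem b) f hf)]

lemma nle_of_left' (e : S) (he : e ∈ R.E) (b : S) : R.nle (e * b) b :=
  ⟨e, he, R.lam (e * b), R.lam_mem _, rfl, R.bd_left b e he⟩

lemma nle_of_eq_left' {a b : S} (e : S) (he : e ∈ R.E) (h : a = e * b) : R.nle a b := by
  rw [h]; exact R.nle_of_left' e he b

lemma le_left' {a b : S} (h : R.nle a b) : a = R.rho a * b := by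
  obtain ⟨e, he, f, hf, h1, h2⟩ := h
  rw [h1, R.rho_left' e he b, mul_assoc, R.rho_mul b]

lemma le_right' {a b : S} (h : R.nle a b) : a = b * R.lam a := by
  obtain ⟨e, he, f, hf, h1, h2⟩ := h
  rw [h2, R.lam_right' f hf b, ← mul_assoc, R.mul_lam b]

lemma nle_antisymm' {a b : S} (h1 : R.nle a b) (h2 : R.nle b a) : a = b := by
  have hab : a = b * R.lam a := R.le_right' h1
  have hba : b = a * R.lam b := R.le_right' h2
  have h3 : a = a * (R.lam b * R.lam a) := by rw [← mul_assoc, ← hba, ← hab]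
  have hff : R.lam b * R.lam a * R.lam b = R.lam b * R.lam a := by
    rw [mul_assoc, R.comm _ (R.lam_mem a) _ (R.lam_mem b), ← mul_assoc,
      R.idem _ (R.lam_mem b)]
  have h4 : a * R.lam b = a := by
    calc a * R.lam b = a * (R.lam b * R.lam a) * R.lam b := by rw [← h3]
      _ = a * (R.lam b * R.lam a * R.lam b) := by rw [mul_assoc]
      _ = a * (R.lam b * R.lam a) := by rw [hff]
      _ = a := h3.symm
  rw [hba, h4]

lemma mem_E_le' {e e' : S} (he' : e' ∈ R.E) (h : R.nle e e') : e = e * e' := by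
  obtain ⟨g, hg, f, hf, hge, _⟩ := h
  rw [hge, mul_assoc, R.idem e' he']

lemma compat_of_le' {u v w : S} (hu : R.nle u w) (hv : R.nle v w) : R.compat u v := by
  have hu1 := R.le_right' hu
  have hv1 := R.le_right' hv
  have hu2 := R.le_left' hu
  have hv2 := R.le_left' hv
  constructor
  · conv_lhs => rw [hu1]
    conv_rhs => rw [hv1]
    rw [mul_assoc, mul_assoc, R.comm _ (R.lam_mem u) _ (R.lam_mem v)]
  · conv_lhs => rw [hu2]
    conv_rhs => rw [hv2]
    rw [← mul_assoc, ← mul_assoc, R.comm _ (R.rho_mem v) _ (R.rho_mem u)]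

end RestrictionSemigroup

/-- In a complete restriction monoid, every nonempty family `T` has a meet,
given by `f * s` for any `s ∈ T`, where `f` is the join of all projections `g`
with `g * x = g * y` for all `x, y ∈ T`. -/
theorem complete_restriction_monoid_meets {S : Type*} [Monoid S]
    (R : RestrictionSemigroup S)
    (hjoins : ∀ A : Set S, A.Nonempty → (∀ a ∈ A, ∀ b ∈ A, R.compat a b) →
      ∃ s, R.isJoin A s)
    (hEjoin : ∀ A ⊆ R.E, ∃ s, R.isJoin A s)
    (hEmem : ∀ A ⊆ R.E, ∀ s, R.isJoin A s → s ∈ R.E)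
    (hE : ∀ e ∈ R.E, ∀ A ⊆ R.E, ∀ s, R.isJoin A s →
      R.isJoin ((fun a => e * a) '' A) (e * s)) :
    ∀ T : Set S, T.Nonempty →
      ∀ f, R.isJoin {g | g ∈ R.E ∧ ∀ x ∈ T, ∀ y ∈ T, g * x = g * y} f →
        ∀ s ∈ T, R.isMeet T (f * s) := by
  intro T hT f hf s hs
  set G : Set S := {g | g ∈ R.E ∧ ∀ x ∈ T, ∀ y ∈ T, g * x = g * y} with hGdef
  have hGE : G ⊆ R.E := fun g hg => hg.1
  have hfE : f ∈ R.E := hEmem G hGE f hf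
  have key : ∀ x ∈ T, f * x = f * s := by
    intro x hx
    by_cases hGne : G.Nonempty
    · obtain ⟨g0, hg0⟩ := hGne
      set A : Set S := (fun g => g * s) '' G with hAdef
      have hAne : A.Nonempty := ⟨g0 * s, g0, hg0, rfl⟩
      have hcompat : ∀ a ∈ A, ∀ b ∈ A, R.compat a b := by
        rintro a ⟨g, hg, rfl⟩ b ⟨g', hg', rfl⟩
        exact R.compat_of_le' (R.nle_of_left' g (hGE hg) s)
          (R.nle_of_left' g' (hGE hg') s)
      obtain ⟨p, hp⟩ := hjoins A hAne hcompat
      have himg : ∀ y ∈ T, (fun g => g * y) '' G = A := by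
        intro y hy
        ext a
        constructor
        · rintro ⟨g, hg, rfl⟩
          exact ⟨g, hg, hg.2 s hs y hy⟩
        · rintro ⟨g, hg, rfl⟩
          exact ⟨g, hg, hg.2 y hy s hs⟩
      have main : ∀ y ∈ T, f * y = p := by
        intro y hy
        have hpy : R.isJoin ((fun g => g * y) '' G) p := by rw [himg y hy]; exact hp
        have hply : R.nle p y := by
          refine hpy.2 y ?_
          rintro a ⟨g, hg, rfl⟩
          exact R.nle_of_left' g (hGE hg) y
        have hple : R.nle p (f * y) := by
          refine hpy.2 (f * y) ?_
          rintro a ⟨g, hg, rfl⟩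
          have hgf : g = g * f := R.mem_E_le' hfE (hf.1 g hg)
          have hgy : g * y = g * (f * y) := by rw [← mul_assoc, ← hgf]
          exact R.nle_of_eq_left' g (hGE hg) hgy
        have hdist := hE (R.rho y) (R.rho_mem y) G hGE f hf
        have h5 : R.nle (R.rho y * f) (R.rho p) := by
          refine hdist.2 (R.rho p) ?_
          rintro a ⟨g, hg, rfl⟩
          have hgy : R.rho (g * y) = g * R.rho y := R.rho_left' g (hGE hg) y
          obtain ⟨e, he, f₂, hf₂, h1, h2⟩ := hpy.1 (g * y) ⟨g, hg, rfl⟩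
          have h3 : R.rho (g * y) = e * R.rho p := by
            rw [h1]; exact R.rho_left' e he p
          have h4 : R.rho y * g = e * R.rho p := by
            rw [← R.comm g (hGE hg) _ (R.rho_mem y), ← hgy, h3]
          exact R.nle_of_eq_left' e he h4
        have h6 : R.rho y * f = R.rho y * f * R.rho p := R.mem_E_le' (R.rho_mem p) h5
        have hpy2 : p = R.rho p * y := R.le_left' hply
        have h7 : f * y = (R.rho y * f) * p := by
          calc f * y = f * (R.rho y * y) := by rw [R.rho_mul y]
            _ = (f * R.rho y) * y := by rw [mul_assoc]
            _ = (R.rho y * f) * y := by rw [R.comm f hfE _ (R.rho_mem y)]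
            _ = ((R.rho y * f) * R.rho p) * y := by rw [← h6]
            _ = (R.rho y * f) * (R.rho p * y) := by rw [mul_assoc]
            _ = (R.rho y * f) * p := by rw [← hpy2]
        have h8 : R.nle (f * y) p :=
          R.nle_of_eq_left' _ (R.mul_mem _ (R.rho_mem y) _ hfE) h7
        exact R.nle_antisymm' h8 hple
      rw [main x hx, main s hs]
    · have hle : ∀ t, R.nle f t := fun t => hf.2 t (fun a ha => absurd ⟨a, ha⟩ hGne)
      have h1 : f = f * x := by
        have h := R.le_left' (hle x)
        rwa [R.rho_proj f hfE] at h
      have h2 : f = f * s := by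
        have h := R.le_left' (hle s)
        rwa [R.rho_proj f hfE] at h
      rw [← h1, ← h2]
  refine ⟨?_, ?_⟩
  · intro x hx
    have h1 : f * s = f * x := (key x hx).symm
    rw [h1]
    exact R.nle_of_left' f hfE x
  · intro w hw
    have hws : w = R.rho w * s := R.le_left' (hw s hs)
    have hwmem : R.rho w ∈ G := by
      refine ⟨R.rho_mem w, ?_⟩
      intro x hx y hy
      have h1 : w = R.rho w * x := R.le_left' (hw x hx)
      have h2 : w = R.rho w * y := R.le_left' (hw y hy)
      rw [← h1, ← h2]
    have h3 : R.rho w = R.rho w * f := R.mem_E_le' hfE (hf.1 _ hwmem)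
    have h4 : w = R.rho w * (f * s) := by rw [← mul_assoc, ← h3, ← hws]
    exact R.nle_of_eq_left' _ (R.rho_mem w) h4
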